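/- If G and G' are labeled graphs on V over F_q and there exists a nonzero c ∈ F_q such that cG and G' are locally equivalent, then there exists an isotropic system L on V having both G and G' as fundamental graphs. -/

import Mathlib

open Matrix

section Defs

variable {F : Type} [Field F] {V : Type} [Fintype V] [DecidableEq V]

/-- The bilinear form on `K = F × F`: `⟨(x,y),(x',y')⟩ = x·y' − x'·y`. -/
def formK (a b : F × F) : F := a.1 * b.2 - b.1 * a.2

/-- The bilinear form on `K^V`: `⟨A,A'⟩ = Σ_v ⟨A v, A' v⟩`. -/
def formKV (A B : V → F × F) : F := ∑ v, formK (A v) (B v)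

/-- An isotropic system: an `n`-dimensional subspace of `K^V` on which the form vanishes. -/
def IsIsotropic (L : Submodule F (V → F × F)) : Prop :=
  Module.finrank F L = Fintype.card V ∧ ∀ A ∈ L, ∀ B ∈ L, formKV A B = 0

/-- A labeled graph on `V` over `F`: a symmetric matrix with zero diagonal. -/
def IsLGraph (G : Matrix V V F) : Prop := G.IsSymm ∧ ∀ v, G v v = 0

/-- The `2n × 2n` matrix `D(A,B)` with four diagonal blocks
`[[diag Z, diag T],[diag X, diag Y]]` where `A = (X,Y)`, `B = (Z,T)`. -/
def Dmat (A B : V → F × F) : Matrix (V ⊕ V) (V ⊕ V) F :=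
  fromBlocks (diagonal fun v => (B v).1) (diagonal fun v => (B v).2)
    (diagonal fun v => (A v).1) (diagonal fun v => (A v).2)

/-- The diagonal entries of `det D(A,B) = (diag Z)(diag Y) − (diag X)(diag T)`. -/
def detD (A B : V → F × F) (v : V) : F := (B v).1 * (A v).2 - (A v).1 * (B v).2

/-- The `v`-th row of the `n × 2n` matrix `(I | G) · D(A,B)` viewed as a vector in `K^V`. -/
def presRow (G : Matrix V V F) (A B : V → F × F) (v : V) : V → F × F :=
  fun w => ((fromCols (1 : Matrix V V F) G * Dmat A B) v (Sum.inl w),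
            (fromCols (1 : Matrix V V F) G * Dmat A B) v (Sum.inr w))

/-- `(G, A, B)` is a graphic presentation of the isotropic system `L`:
`G` is a labeled graph, `det D(A,B) = c·I` with `c ≠ 0`, and the rows of
`(I | G)·D(A,B)` form a basis of `L`. -/
def IsGraphicPresentation (L : Submodule F (V → F × F)) (G : Matrix V V F)
    (A B : V → F × F) : Prop :=
  IsLGraph G ∧ (∃ c : F, c ≠ 0 ∧ ∀ v, detD A B v = c) ∧
  LinearIndependent F (presRow G A B) ∧
  Submodule.span F (Set.range (presRow G A B)) = L

/-- `G` is a fundamental graph of `L`. -/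
def IsFundamental (L : Submodule F (V → F × F)) (G : Matrix V V F) : Prop :=
  ∃ A B, IsGraphicPresentation L G A B

/-- The local complementation operation `G *_r v`. -/
def starOp (G : Matrix V V F) (r : F) (v : V) : Matrix V V F :=
  Matrix.of fun u w => if u = v ∨ w = v ∨ u = w then G u w else G u w + r * G v u * G v w

/-- The operation `G ∘_s v`, multiplying the edges at `v` by `s`. -/
def circOp (G : Matrix V V F) (s : F) (v : V) : Matrix V V F :=
  Matrix.of fun u w => if u = v ∨ w = v then s * G u w else G u w

/-- One local operation. -/
def LocalStep (G H : Matrix V V F) : Prop :=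
  (∃ v r, H = starOp G r v) ∨ (∃ v s, s ≠ (0 : F) ∧ H = circOp G s v)

/-- Two labeled graphs are locally equivalent if one is obtained from the other by a
finite sequence of operations `*_r v` and `∘_s v`. -/
def LocallyEquivalent (G H : Matrix V V F) : Prop :=
  Relation.ReflTransGen LocalStep G H

/-- A complete vector: all coordinates nonzero. -/
def CompleteVec (A : V → F × F) : Prop := ∀ v, A v ≠ 0

/-- `E_{v,x}`: the vector equal to `x` at `v` and `0` elsewhere. -/
def Ev (v : V) (x : F × F) : V → F × F := fun w => if w = v then x else 0

/-- `Â`: the span of the vectors `A_v = E_{v, A v}`. -/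
def hatSub (A : V → F × F) : Submodule F (V → F × F) :=
  Submodule.span F (Set.range fun v => Ev v (A v))

/-- An Eulerian vector of `L`: a complete vector with `Â ∩ L = 0`. -/
def IsEulerian (L : Submodule F (V → F × F)) (A : V → F × F) : Prop :=
  CompleteVec A ∧ hatSub A ⊓ L = ⊥

/-- `ε(L)`: the number of Eulerian vectors of `L`. -/
noncomputable def eulerCount (L : Submodule F (V → F × F)) : ℕ :=
  Set.ncard {A | IsEulerian L A}

/-- The number of pairs `(A,B)` such that `(G,A,B)` is a graphic presentation of `L`. -/
noncomputable def lamCount (L : Submodule F (V → F × F)) (G : Matrix V V F) : ℕ :=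
  Set.ncard {p : (V → F × F) × (V → F × F) | IsGraphicPresentation L G p.1 p.2}

/-- The number of graphic presentations (triples `(G,A,B)`) of `L`. -/
noncomputable def presCount (L : Submodule F (V → F × F)) : ℕ :=
  Set.ncard {t : Matrix V V F × (V → F × F) × (V → F × F) |
    IsGraphicPresentation L t.1 t.2.1 t.2.2}

/-- `l(G)`: the number of labeled graphs locally equivalent to `G`. -/
noncomputable def locCount (G : Matrix V V F) : ℕ :=
  Set.ncard {H | LocallyEquivalent G H}

/-- Connectivity of a labeled graph: the simple graph with edges `{v,w}` with
`g_{vw} ≠ 0` is connected. -/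
def GraphConnected (G : Matrix V V F) : Prop :=
  (SimpleGraph.fromRel fun v w => G v w ≠ 0).Connected

end Defs

variable {F : Type} [Field F] [Fintype F] {V : Type} [Fintype V] [DecidableEq V] [Nonempty V]


section Aux
set_option linter.unusedSectionVars false

lemma presRow_apply (G : Matrix V V F) (A B : V → F × F) (v w : V) :
    presRow G A B v w = ((if v = w then (B w).1 else 0) + G v w * (A w).1,
                         (if v = w then (B w).2 else 0) + G v w * (A w).2) := by
  simp [presRow, Dmat, mul_apply, Fintype.sum_sum_type, fromCols, fromBlocks,
    diagonal, one_apply, ite_mul, mul_ite, Finset.sum_ite_eq, Finset.sum_ite_eq']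

section Helpers
variable {ι M : Type} [AddCommGroup M] [Module F M]

lemma spanRange_eq (f g : ι → M) (h1 : ∀ i, g i ∈ Submodule.span F (Set.range f))
    (h2 : ∀ i, f i ∈ Submodule.span F (Set.range g)) :
    Submodule.span F (Set.range g) = Submodule.span F (Set.range f) := by
  apply le_antisymm <;> rw [Submodule.span_le, Set.range_subset_iff] <;> assumption

lemma li_transfer [Fintype ι] (f g : ι → M) (hf : LinearIndependent F f)
    (h : Submodule.span F (Set.range g) = Submodule.span F (Set.range f)) :
    LinearIndependent F g := by
  rw [linearIndependent_iff_card_eq_finrank_span] at hf ⊢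
  unfold Set.finrank at hf ⊢
  rwa [h]
end Helpers

lemma circ_row (G : Matrix V V F) (A B : V → F × F) (v : V) (s : F) (hs : s ≠ 0)
    (hd : G v v = 0) (u : V) :
    presRow (circOp G s v) (fun u => if u = v then s⁻¹ • A u else A u)
      (fun u => if u = v then s • B u else B u) u
      = (if u = v then s else 1) • presRow G A B u := by
  funext w
  rcases eq_or_ne w v with rfl | hw
  · rcases eq_or_ne u w with rfl | hu
    · simp [presRow_apply, circOp, hd, Prod.ext_iff]
    · simp only [presRow_apply, circOp, Matrix.of_apply, if_neg hu, Prod.ext_iff,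
        if_pos (Or.inr rfl), if_pos rfl, Prod.smul_mk, smul_eq_mul, one_smul, Prod.smul_fst, Prod.smul_snd,
        Pi.smul_apply, or_true, if_true, true_or]
      constructor <;> field_simp <;> ring
  · rcases eq_or_ne u v with rfl | hu
    · simp only [presRow_apply, circOp, Matrix.of_apply, if_neg (Ne.symm hw),
        if_neg hw, if_pos (Or.inl rfl), Prod.ext_iff, Prod.smul_mk, smul_eq_mul,
        if_pos rfl, zero_add, Pi.smul_apply, or_true, if_true, true_or]
      constructor <;> ring
    · have : ¬ (u = v ∨ w = v) := by simp [hu, hw]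
      simp only [presRow_apply, circOp, Matrix.of_apply, if_neg this, if_neg hw,
        Prod.ext_iff, one_smul, Pi.smul_apply, if_neg hu]

lemma star_row (G : Matrix V V F) (A B : V → F × F) (v : V) (r : F)
    (hsym : ∀ a b, G a b = G b a) (hd : ∀ a, G a a = 0) (u : V) :
    presRow (starOp G r v) (fun u => if u = v then A u + r • B u else A u)
      (fun u => if u = v then B u else B u + (r * G v u * G v u) • A u) u
      = presRow G A B u + (if u = v then 0 else r * G v u) • presRow G A B v := by
  funext w
  simp only [presRow_apply, starOp, Matrix.of_apply, Pi.add_apply, Pi.smul_apply,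
    Prod.smul_mk, Prod.mk_add_mk, smul_eq_mul, Prod.ext_iff, Prod.smul_fst,
    Prod.smul_snd, Prod.fst_add, Prod.snd_add]
  rcases eq_or_ne u v with rfl | hu
  · simp only [if_pos rfl, true_or, if_true, zero_mul, add_zero]
    rcases eq_or_ne u w with rfl | hw
    · simp [hd u]
    · simp [hw, Ne.symm hw]
  · simp only [if_neg hu]
    rcases eq_or_ne w v with rfl | hw
    · have huw : u ≠ w := hu
      simp only [if_neg hu, if_neg huw, if_pos rfl, or_true, true_or, if_true,
        Prod.smul_fst, Prod.smul_snd, smul_eq_mul, Prod.mk.injEq]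
      rw [hsym w u, hd w]
      constructor <;>
        simp only [Prod.fst_add, Prod.snd_add, Prod.smul_fst, Prod.smul_snd,
          smul_eq_mul] <;> ring
    · rcases eq_or_ne u w with rfl | huw
      · simp only [if_pos rfl, if_neg (Ne.symm hw), or_true, true_or, if_true,
          Prod.smul_fst, Prod.smul_snd, smul_eq_mul, Prod.mk.injEq, if_neg hu,
          if_neg hw]
        rw [hd u]
        constructor <;>
          simp only [Prod.fst_add, Prod.snd_add, Prod.smul_fst, Prod.smul_snd,
            smul_eq_mul] <;> ring
      · have : ¬ (u = v ∨ w = v ∨ u = w) := by simp [hu, hw, huw]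
        simp only [if_neg this, if_neg hu, if_neg hw, if_neg huw,
          if_neg (fun h => hw (h ▸ rfl) : ¬ v = w), Prod.mk.injEq]
        constructor <;> ring

lemma pres_circ {L : Submodule F (V → F × F)} {G : Matrix V V F} {A B : V → F × F}
    (hP : IsGraphicPresentation L G A B) (v : V) (s : F) (hs : s ≠ 0) :
    IsGraphicPresentation L (circOp G s v)
      (fun u => if u = v then s⁻¹ • A u else A u)
      (fun u => if u = v then s • B u else B u) := by
  obtain ⟨⟨hsymm, hd⟩, ⟨c, hc, hdet⟩, hli, hspan⟩ := hP
  have hsy : ∀ a b, G a b = G b a := fun a b => hsymm.apply b a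
  have hrow := circ_row G A B v s hs (hd v)
  have h1 : ∀ i, presRow (circOp G s v) (fun u => if u = v then s⁻¹ • A u else A u)
      (fun u => if u = v then s • B u else B u) i
      ∈ Submodule.span F (Set.range (presRow G A B)) := fun i => by
    rw [hrow i]
    exact Submodule.smul_mem _ _ (Submodule.subset_span ⟨i, rfl⟩)
  have h2 : ∀ i, presRow G A B i ∈ Submodule.span F (Set.range
      (presRow (circOp G s v) (fun u => if u = v then s⁻¹ • A u else A u)
        (fun u => if u = v then s • B u else B u))) := fun i => by
    have hne : (if i = v then s else 1) ≠ 0 := by split_ifs <;> simp [hs]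
    have : presRow G A B i = (if i = v then s else 1)⁻¹ •
        presRow (circOp G s v) (fun u => if u = v then s⁻¹ • A u else A u)
          (fun u => if u = v then s • B u else B u) i := by
      rw [hrow i, smul_smul, inv_mul_cancel₀ hne, one_smul]
    rw [this]
    exact Submodule.smul_mem _ _ (Submodule.subset_span ⟨i, rfl⟩)
  have hsp := spanRange_eq _ _ h1 h2
  refine ⟨⟨?_, ?_⟩, ⟨c, hc, ?_⟩, li_transfer _ _ hli hsp, hsp.trans hspan⟩
  · apply Matrix.IsSymm.ext
    intro i j
    simp only [circOp, Matrix.of_apply, hsy j i]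
    by_cases h1 : i = v <;> by_cases h2 : j = v <;> simp [h1, h2]
  · intro u
    simp [circOp, hd u]
  · intro u
    rcases eq_or_ne u v with rfl | h
    · simp only [detD, if_pos rfl, ↓reduceIte, Prod.smul_fst, Prod.smul_snd, smul_eq_mul]
      rw [← hdet u]
      simp only [detD]
      field_simp
    · simpa [detD, if_neg h] using hdet u

lemma pres_star {L : Submodule F (V → F × F)} {G : Matrix V V F} {A B : V → F × F}
    (hP : IsGraphicPresentation L G A B) (v : V) (r : F) :
    IsGraphicPresentation L (starOp G r v)
      (fun u => if u = v then A u + r • B u else A u)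
      (fun u => if u = v then B u else B u + (r * G v u * G v u) • A u) := by
  obtain ⟨⟨hsymm, hd⟩, ⟨c, hc, hdet⟩, hli, hspan⟩ := hP
  have hsy : ∀ a b, G a b = G b a := fun a b => hsymm.apply b a
  have hrow := star_row G A B v r hsy hd
  have hv : presRow (starOp G r v) (fun u => if u = v then A u + r • B u else A u)
      (fun u => if u = v then B u else B u + (r * G v u * G v u) • A u) v
      = presRow G A B v := by
    rw [hrow v]; simp
  have h1 : ∀ i, presRow (starOp G r v) (fun u => if u = v then A u + r • B u else A u)
      (fun u => if u = v then B u else B u + (r * G v u * G v u) • A u) i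
      ∈ Submodule.span F (Set.range (presRow G A B)) := fun i => by
    rw [hrow i]
    exact Submodule.add_mem _ (Submodule.subset_span ⟨i, rfl⟩)
      (Submodule.smul_mem _ _ (Submodule.subset_span ⟨v, rfl⟩))
  have h2 : ∀ i, presRow G A B i ∈ Submodule.span F (Set.range
      (presRow (starOp G r v) (fun u => if u = v then A u + r • B u else A u)
        (fun u => if u = v then B u else B u + (r * G v u * G v u) • A u))) := fun i => by
    have : presRow G A B i
        = presRow (starOp G r v) (fun u => if u = v then A u + r • B u else A u)
            (fun u => if u = v then B u else B u + (r * G v u * G v u) • A u) i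
          - (if i = v then 0 else r * G v i) •
            presRow (starOp G r v) (fun u => if u = v then A u + r • B u else A u)
              (fun u => if u = v then B u else B u + (r * G v u * G v u) • A u) v := by
      rw [hrow i, hv, add_sub_cancel_right]
    rw [this]
    exact Submodule.sub_mem _ (Submodule.subset_span ⟨i, rfl⟩)
      (Submodule.smul_mem _ _ (Submodule.subset_span ⟨v, rfl⟩))
  have hsp := spanRange_eq _ _ h1 h2
  refine ⟨⟨?_, ?_⟩, ⟨c, hc, ?_⟩, li_transfer _ _ hli hsp, hsp.trans hspan⟩
  · apply Matrix.IsSymm.ext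
    intro i j
    simp only [starOp, Matrix.of_apply]
    have hcnd : (j = v ∨ i = v ∨ j = i) ↔ (i = v ∨ j = v ∨ i = j) := by
      constructor <;> rintro (h | h | h) <;> simp [h]
    by_cases h : (i = v ∨ j = v ∨ i = j)
    · rw [if_pos (hcnd.mpr h), if_pos h, hsy j i]
    · rw [if_neg (fun hh => h (hcnd.mp hh)), if_neg h, hsy j i]
      ring
  · intro u
    simp [starOp, hd u]
  · intro u
    rcases eq_or_ne u v with rfl | h
    · simp only [detD, if_pos rfl, eq_self_iff_true, if_true, Prod.fst_add,
        Prod.snd_add, Prod.smul_fst, Prod.smul_snd, smul_eq_mul]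
      rw [← hdet u]
      simp only [detD]
      ring
    · simp only [detD, if_neg h, Prod.fst_add, Prod.snd_add, Prod.smul_fst,
        Prod.smul_snd, smul_eq_mul]
      rw [← hdet u]
      simp only [detD]
      ring

lemma formKV_zero_left (B : V → F × F) : formKV (0 : V → F × F) B = 0 := by
  simp [formKV, formK]

lemma formKV_zero_right (A : V → F × F) : formKV A (0 : V → F × F) = 0 := by
  simp [formKV, formK]

lemma formKV_add_left (A A' B : V → F × F) :
    formKV (A + A') B = formKV A B + formKV A' B := by
  simp only [formKV, ← Finset.sum_add_distrib]
  refine Finset.sum_congr rfl fun v _ => ?_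
  simp only [formK, Pi.add_apply, Prod.fst_add, Prod.snd_add]
  ring

lemma formKV_add_right (A B B' : V → F × F) :
    formKV A (B + B') = formKV A B + formKV A B' := by
  simp only [formKV, ← Finset.sum_add_distrib]
  refine Finset.sum_congr rfl fun v _ => ?_
  simp only [formK, Pi.add_apply, Prod.fst_add, Prod.snd_add]
  ring

lemma formKV_smul_left (t : F) (A B : V → F × F) :
    formKV (t • A) B = t * formKV A B := by
  simp only [formKV, Finset.mul_sum]
  refine Finset.sum_congr rfl fun v _ => ?_
  simp only [formK, Pi.smul_apply, Prod.smul_fst, Prod.smul_snd, smul_eq_mul]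
  ring

lemma formKV_smul_right (t : F) (A B : V → F × F) :
    formKV A (t • B) = t * formKV A B := by
  simp only [formKV, Finset.mul_sum]
  refine Finset.sum_congr rfl fun v _ => ?_
  simp only [formK, Pi.smul_apply, Prod.smul_fst, Prod.smul_snd, smul_eq_mul]
  ring


end Aux

/-- If `cG` and `G'` are locally equivalent for some nonzero `c`, then there is an
isotropic system having both `G` and `G'` as fundamental graphs. -/
theorem locallyEquivalent_common_isotropic (hchar : ringChar F ≠ 2)
    (G G' : Matrix V V F) (hG : IsLGraph G) (hG' : IsLGraph G')
    (c : F) (hc : c ≠ 0) (h : LocallyEquivalent (c • G) G') :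
    ∃ L : Submodule F (V → F × F),
      IsIsotropic L ∧ IsFundamental L G ∧ IsFundamental L G' := by

  classical
  set A0 : V → F × F := fun _ => ((0 : F), (1 : F)) with hA0
  set B0 : V → F × F := fun _ => ((1 : F), (0 : F)) with hB0
  set B1 : V → F × F := fun _ => (c, (0 : F)) with hB1
  set τ0 := presRow G A0 B0 with hτ0def
  set L := Submodule.span F (Set.range τ0) with hL
  have hsy : ∀ a b, G a b = G b a := fun a b => hG.1.apply b a
  have hτ0 : ∀ v w, τ0 v w = ((if v = w then (1 : F) else 0), G v w) := by
    intro v w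
    rw [hτ0def, presRow_apply]
    simp [hA0, hB0]
  have li0 : LinearIndependent F τ0 := by
    rw [Fintype.linearIndependent_iff]
    intro g hg i
    have h1 := congrArg (fun f => (f i).1) hg
    simp only [Finset.sum_apply, Prod.fst_sum, Pi.smul_apply, Prod.smul_fst,
      smul_eq_mul, hτ0, mul_ite, mul_one, mul_zero, Finset.sum_ite_eq',
      Finset.mem_univ, if_true, Pi.zero_apply, Prod.fst_zero] at h1
    exact h1
  have P0 : IsGraphicPresentation L G A0 B0 :=
    ⟨hG, ⟨1, one_ne_zero, fun v => by simp [detD, hA0, hB0]⟩, li0, rfl⟩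
  have hrowc : ∀ v, presRow (c • G) A0 B1 v = c • τ0 v := by
    intro v
    funext w
    rw [presRow_apply]
    simp only [Pi.smul_apply, hτ0 v w, hA0, hB1, Matrix.smul_apply, smul_eq_mul,
      Prod.smul_mk, mul_ite, mul_one, mul_zero, add_zero, zero_add, Prod.mk.injEq,
      ite_self]
  have hLGc : IsLGraph (c • G) := by
    refine ⟨Matrix.IsSymm.ext fun i j => ?_, fun u => ?_⟩
    · simp [Matrix.smul_apply, hsy j i]
    · simp [Matrix.smul_apply, hG.2 u]
  have h1c : ∀ i, presRow (c • G) A0 B1 i ∈ L := fun i => by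
    rw [hrowc i]
    exact Submodule.smul_mem _ _ (Submodule.subset_span ⟨i, rfl⟩)
  have h2c : ∀ i, τ0 i ∈ Submodule.span F (Set.range (presRow (c • G) A0 B1)) := fun i => by
    have : τ0 i = c⁻¹ • presRow (c • G) A0 B1 i := by
      rw [hrowc i, smul_smul, inv_mul_cancel₀ hc, one_smul]
    rw [this]
    exact Submodule.smul_mem _ _ (Submodule.subset_span ⟨i, rfl⟩)
  have hspc : Submodule.span F (Set.range (presRow (c • G) A0 B1)) = L :=
    spanRange_eq _ _ h1c h2c
  have Pc : IsGraphicPresentation L (c • G) A0 B1 :=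
    ⟨hLGc, ⟨c, hc, fun v => by simp [detD, hA0, hB1]⟩,
      li_transfer _ _ li0 hspc, hspc⟩
  have main : ∀ H, LocallyEquivalent (c • G) H → ∃ A B, IsGraphicPresentation L H A B := by
    intro H hH
    induction hH with
    | refl => exact ⟨A0, B1, Pc⟩
    | tail hab hbc ih =>
      obtain ⟨A2, B2, hP⟩ := ih
      rcases hbc with ⟨v, r, rfl⟩ | ⟨v, s, hs, rfl⟩
      · exact ⟨_, _, pres_star hP v r⟩
      · exact ⟨_, _, pres_circ hP v s hs⟩
  have gen : ∀ a b, formKV (τ0 a) (τ0 b) = 0 := by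
    intro a b
    simp only [formKV, formK, hτ0, ite_mul, one_mul, zero_mul,
      Finset.sum_sub_distrib, Finset.sum_ite_eq, Finset.mem_univ, if_true, hsy a b]
    exact sub_self _
  have hiso1 : ∀ A ∈ L, ∀ b, formKV A (τ0 b) = 0 := by
    intro A hA b
    induction hA using Submodule.span_induction with
    | mem x hx => obtain ⟨a, rfl⟩ := hx; exact gen a b
    | zero => exact formKV_zero_left _
    | add x y _ _ hx hy => rw [formKV_add_left, hx, hy, add_zero]
    | smul t x _ hx => rw [formKV_smul_left, hx, mul_zero]
  have hiso : ∀ A ∈ L, ∀ B ∈ L, formKV A B = 0 := by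
    intro A hA Bv hB
    induction hB using Submodule.span_induction with
    | mem x hx => obtain ⟨b, rfl⟩ := hx; exact hiso1 A hA b
    | zero => exact formKV_zero_right _
    | add x y _ _ hx hy => rw [formKV_add_right, hx, hy, add_zero]
    | smul t x _ hx => rw [formKV_smul_right, hx, mul_zero]
  have hrank : Module.finrank F L = Fintype.card V := by
    have hfr := finrank_span_eq_card li0
    unfold Set.finrank at hfr
    exact hfr
  exact ⟨L, ⟨hrank, hiso⟩, ⟨A0, B0, P0⟩, main G' h⟩
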